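/- arXiv:2211.16007 — 2 statements merged into one kernel-verified Lean document; each statement's English description precedes it below -/
import Mathlib

section
/- Let μ = (μ₁ ≥ ... ≥ μ_s ≥ 1) be a partition with all successive differences μᵢ − μ_{i+1} even for even indices i (dual partition of a symplectic nilpotent type), s ≥ 2. Then ∑ μᵢ² − 2·∑_{i odd} μᵢ > ∑ (μᵢ − μ_{i+1})² (with μ_{s+1}:=0) holds unless μ = (μ₁,1,...,1) is a hook-dual, or μ = (2,2), or μ = (2,2,2). -/
/-!
Write `Dᵢ := 2 μᵢ μᵢ₊₁ - μᵢ₊₁² - 2 [i odd] μᵢ`, so that the difference of the two sides is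
`∑ Dᵢ`. A pair of consecutive terms equals `D₁ + D₂ = 2 μ₁ (μ₂ - 1) - (μ₂ - μ₃)²`, which is at
least `μ₂² - 1` as soon as `μ₃ ≥ 1`. Peeling off such pairs shows `∑ Dᵢ ≥ -2` for every partition
with at least two parts: only the last one or two parts can make a negative contribution.
Outside the exceptional cases `μ₂ ≥ 2`, so for `s ≥ 4` the first pair contributes at least `3`,
and the cases `s = 2, 3` are checked directly.
-/

open Finset

def excessTerm (μ : ℕ → ℤ) (i : ℕ) : ℤ :=
  2 * μ i * μ (i + 1) - μ (i + 1) ^ 2 - if Odd i then 2 * μ i else 0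

theorem sum_excessTerm_eq (μ : ℕ → ℤ) (s : ℕ) :
    ∑ i ∈ Icc 1 s, excessTerm μ i =
      ∑ i ∈ Icc 1 s, μ i ^ 2 - 2 * ∑ i ∈ (Icc 1 s).filter (fun i => Odd i), μ i
        - ∑ i ∈ Icc 1 s, (μ i - μ (i + 1)) ^ 2 := by
  rw [sum_filter, mul_sum, ← sum_sub_distrib, ← sum_sub_distrib]
  refine sum_congr rfl fun i _ => ?_
  unfold excessTerm
  split_ifs <;> ring

theorem excessTerm_add_two (μ : ℕ → ℤ) (i : ℕ) :
    excessTerm μ (i + 2) = excessTerm (fun j => μ (j + 2)) i := by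
  simp only [excessTerm, Nat.odd_add, even_two, iff_true]

theorem excessTerm_one_add_excessTerm_two (μ : ℕ → ℤ) :
    excessTerm μ 1 + excessTerm μ 2 = 2 * μ 1 * (μ 2 - 1) - (μ 2 - μ 3) ^ 2 := by
  simp only [excessTerm]
  norm_num
  ring

theorem sum_Icc_one_eq_add_add_sum_shift {M : Type*} [AddCommMonoid M] (f : ℕ → M) {s : ℕ}
    (hs : 2 ≤ s) : ∑ i ∈ Icc 1 s, f i = f 1 + f 2 + ∑ i ∈ Icc 1 (s - 2), f (i + 2) := by
  obtain ⟨n, rfl⟩ := Nat.exists_eq_add_of_le' hs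
  induction n with
  | zero => simp [sum_Icc_succ_top]
  | succ n ih =>
    rw [sum_Icc_succ_top (by omega), ih (by omega), show n + 1 + 2 - 2 = n + 1 by omega,
      sum_Icc_succ_top (by omega), show n + 2 - 2 = n by omega, add_assoc]

theorem sum_excessTerm_eq_add_shift (μ : ℕ → ℤ) {s : ℕ} (hs : 2 ≤ s) :
    ∑ i ∈ Icc 1 s, excessTerm μ i = 2 * μ 1 * (μ 2 - 1) - (μ 2 - μ 3) ^ 2 +
      ∑ i ∈ Icc 1 (s - 2), excessTerm (fun j => μ (j + 2)) i := by
  rw [sum_Icc_one_eq_add_add_sum_shift _ hs, excessTerm_one_add_excessTerm_two]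
  simp only [excessTerm_add_two]

theorem sum_excessTerm_of_length_two (μ : ℕ → ℤ) (h : μ 3 = 0) :
    ∑ i ∈ Icc 1 2, excessTerm μ i = 2 * μ 1 * (μ 2 - 1) - μ 2 ^ 2 := by
  rw [sum_excessTerm_eq_add_shift μ le_rfl, h]
  simp

theorem sum_excessTerm_of_length_three (μ : ℕ → ℤ) (h : μ 4 = 0) :
    ∑ i ∈ Icc 1 3, excessTerm μ i = 2 * μ 1 * (μ 2 - 1) - (μ 2 - μ 3) ^ 2 - 2 * μ 3 := by
  rw [sum_excessTerm_eq_add_shift μ (by norm_num)]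
  simp [excessTerm, h]
  ring

/-- `μ₁ ≥ ⋯ ≥ μₛ ≥ 1` is a partition with `s` parts, padded by `μₛ₊₁ = 0`; the other values of
`μ` play no role. -/
structure IsPartitionOfLength (μ : ℕ → ℤ) (s : ℕ) : Prop where
  le_of_lt : ∀ i, 1 ≤ i → i < s → μ (i + 1) ≤ μ i
  one_le : ∀ i, 1 ≤ i → i ≤ s → 1 ≤ μ i
  eq_zero : μ (s + 1) = 0

namespace IsPartitionOfLength

variable {μ : ℕ → ℤ} {s : ℕ}

theorem shift (h : IsPartitionOfLength μ s) (hs : 2 ≤ s) :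
    IsPartitionOfLength (fun j => μ (j + 2)) (s - 2) where
  le_of_lt i hi his := h.le_of_lt (i + 2) (by omega) (by omega)
  one_le i hi his := h.one_le (i + 2) (by omega) (by omega)
  eq_zero := by
    show μ (s - 2 + 1 + 2) = 0
    rw [show s - 2 + 1 + 2 = s + 1 by omega, h.eq_zero]

theorem le_of_le (h : IsPartitionOfLength μ s) {i j : ℕ} (hi : 1 ≤ i) (hij : i ≤ j)
    (hj : j ≤ s) : μ j ≤ μ i := by
  induction j, hij using Nat.le_induction with
  | base => exact le_rfl
  | succ j hij ih => exact (h.le_of_lt j (by omega) (by omega)).trans (ih (by omega))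

theorem two_le_apply_two (h : IsPartitionOfLength μ s)
    (hhook : ¬ ∀ i, 2 ≤ i → i ≤ s → μ i = 1) : 2 ≤ μ 2 := by
  by_contra! h2
  exact hhook fun i hi his =>
    le_antisymm ((h.le_of_le (by norm_num) hi his).trans (by omega)) (h.one_le i (by omega) his)

theorem sq_sub_one_le_pair (h : IsPartitionOfLength μ s) (hs : 3 ≤ s) :
    μ 2 ^ 2 - 1 ≤ 2 * μ 1 * (μ 2 - 1) - (μ 2 - μ 3) ^ 2 := by
  have h12 : μ 2 ≤ μ 1 := h.le_of_lt 1 le_rfl (by omega)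
  have h23 : μ 3 ≤ μ 2 := h.le_of_lt 2 (by norm_num) (by omega)
  have h2 := h.one_le 2 (by norm_num) (by omega)
  have h3 := h.one_le 3 (by norm_num) hs
  nlinarith

theorem neg_two_le_sum_excessTerm (h : IsPartitionOfLength μ s) (hs : 2 ≤ s) :
    -2 ≤ ∑ i ∈ Icc 1 s, excessTerm μ i := by
  induction s using Nat.strong_induction_on generalizing μ with
  | _ s ih =>
    have h12 : μ 2 ≤ μ 1 := h.le_of_lt 1 le_rfl (by omega)
    have h2 := h.one_le 2 (by norm_num) hs
    obtain rfl | rfl | hs4 := (by omega : s = 2 ∨ s = 3 ∨ 4 ≤ s)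
    · rw [sum_excessTerm_of_length_two μ h.eq_zero]
      nlinarith
    · have h23 : μ 3 ≤ μ 2 := h.le_of_lt 2 (by norm_num) (by norm_num)
      have h3 := h.one_le 3 (by norm_num) le_rfl
      rw [sum_excessTerm_of_length_three μ h.eq_zero]
      nlinarith [mul_nonneg (sub_nonneg.2 h12) (sub_nonneg.2 h2),
        mul_nonneg (sub_nonneg.2 h23) (sub_nonneg.2 h3)]
    · rw [sum_excessTerm_eq_add_shift μ hs]
      have hpair := h.sq_sub_one_le_pair (by omega)
      have htail := ih (s - 2) (by omega) (h.shift hs) (by omega)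
      nlinarith

theorem one_le_sum_excessTerm_of_length_two (h : IsPartitionOfLength μ 2) (h2 : 2 ≤ μ 2)
    (hne : ¬ (μ 1 = 2 ∧ μ 2 = 2)) : 1 ≤ ∑ i ∈ Icc 1 2, excessTerm μ i := by
  have h12 : μ 2 ≤ μ 1 := h.le_of_lt 1 le_rfl (by norm_num)
  have h1 : 3 ≤ μ 1 := by omega
  rw [sum_excessTerm_of_length_two μ h.eq_zero]
  nlinarith

theorem one_le_sum_excessTerm_of_length_three (h : IsPartitionOfLength μ 3) (h2 : 2 ≤ μ 2)
    (hne : ¬ (μ 1 = 2 ∧ μ 2 = 2 ∧ μ 3 = 2)) : 1 ≤ ∑ i ∈ Icc 1 3, excessTerm μ i := by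
  have h12 : μ 2 ≤ μ 1 := h.le_of_lt 1 le_rfl (by norm_num)
  have h23 : μ 3 ≤ μ 2 := h.le_of_lt 2 (by norm_num) (by norm_num)
  have h3 := h.one_le 3 (by norm_num) le_rfl
  rw [sum_excessTerm_of_length_three μ h.eq_zero]
  rcases h2.eq_or_lt with h2 | h2
  · obtain h3 | h3 : μ 3 = 1 ∨ μ 3 = 2 := by omega
    all_goals rw [← h2, h3]; omega
  · nlinarith [mul_nonneg (sub_nonneg.2 h12) (sub_nonneg.2 h2.le),
      mul_nonneg (sub_nonneg.2 h23) (sub_nonneg.2 h3)]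

theorem one_le_sum_excessTerm_of_four_le (h : IsPartitionOfLength μ s) (hs : 4 ≤ s)
    (h2 : 2 ≤ μ 2) : 1 ≤ ∑ i ∈ Icc 1 s, excessTerm μ i := by
  rw [sum_excessTerm_eq_add_shift μ (by omega)]
  have hpair := h.sq_sub_one_le_pair (by omega)
  have htail := (h.shift (by omega)).neg_two_le_sum_excessTerm (by omega)
  nlinarith

end IsPartitionOfLength

theorem stmt_4_general (s : ℕ) (μ : ℕ → ℤ) (hs : 2 ≤ s)
    (hanti : ∀ i, 1 ≤ i → i < s → μ (i + 1) ≤ μ i)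
    (hpos : ∀ i, 1 ≤ i → i ≤ s → 1 ≤ μ i)
    (hzero : μ (s + 1) = 0)
    (hexc : ¬ ((∀ i, 2 ≤ i → i ≤ s → μ i = 1) ∨
        (s = 2 ∧ μ 1 = 2 ∧ μ 2 = 2) ∨
        (s = 3 ∧ μ 1 = 2 ∧ μ 2 = 2 ∧ μ 3 = 2))) :
    ∑ i ∈ Icc 1 s, (μ i) ^ 2 - 2 * ∑ i ∈ (Icc 1 s).filter (fun i => Odd i), μ i >
      ∑ i ∈ Icc 1 s, (μ i - μ (i + 1)) ^ 2 := by
  have hμ : IsPartitionOfLength μ s := ⟨hanti, hpos, hzero⟩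
  have h2 := hμ.two_le_apply_two fun h => hexc (Or.inl h)
  suffices 1 ≤ ∑ i ∈ Icc 1 s, excessTerm μ i by linarith [sum_excessTerm_eq μ s]
  obtain rfl | rfl | hs4 := (by omega : s = 2 ∨ s = 3 ∨ 4 ≤ s)
  · exact hμ.one_le_sum_excessTerm_of_length_two h2 fun h => hexc (Or.inr (Or.inl ⟨rfl, h⟩))
  · exact hμ.one_le_sum_excessTerm_of_length_three h2 fun h => hexc (Or.inr (Or.inr ⟨rfl, h⟩))
  · exact hμ.one_le_sum_excessTerm_of_four_le hs4 h2

/-- Combinatorial inequality in Proposition 3.3 (symplectic case): for a partition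
`μ = (μ₁ ≥ … ≥ μ_s ≥ 1)` with `s ≥ 2`, `μ_{s+1} := 0`, and all differences
`μᵢ − μ_{i+1}` even for even `i` (dual partition of a symplectic nilpotent type),
the inequality `∑ μᵢ² − 2∑_{i odd} μᵢ > ∑ (μᵢ − μ_{i+1})²` holds unless `μ` is a
hook-dual partition `(μ₁,1,…,1)`, or `(2,2)`, or `(2,2,2)`. -/
theorem stmt_4 (s : ℕ) (μ : ℕ → ℤ) (hs : 2 ≤ s)
    (hanti : ∀ i, 1 ≤ i → i < s → μ (i + 1) ≤ μ i)
    (hpos : ∀ i, 1 ≤ i → i ≤ s → 1 ≤ μ i)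
    (hzero : μ (s + 1) = 0)
    (hpar : ∀ i, 1 ≤ i → i ≤ s → Even i → Even (μ i - μ (i + 1)))
    (hexc : ¬ ((∀ i, 2 ≤ i → i ≤ s → μ i = 1) ∨
        (s = 2 ∧ μ 1 = 2 ∧ μ 2 = 2) ∨
        (s = 3 ∧ μ 1 = 2 ∧ μ 2 = 2 ∧ μ 3 = 2))) :
    ∑ i ∈ Icc 1 s, (μ i) ^ 2 - 2 * ∑ i ∈ (Icc 1 s).filter (fun i => Odd i), μ i >
      ∑ i ∈ Icc 1 s, (μ i - μ (i + 1)) ^ 2 :=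
  stmt_4_general s μ hs hanti hpos hzero hexc
end

section
/- If μ = (μ₁ ≥ ... ≥ μ_s ≥ 1) is a partition satisfying ∑ μᵢ² − ∑ μᵢ > ∑ (μᵢ − μ_{i+1})² + μ₁ − 2 (μ_{s+1}:=0), then the extended partition μ' = (μ₁,...,μ_s,μ_{s+1}') with μ_s ≥ μ_{s+1}' ≥ 1 and (μ_s, μ_{s+1}') ≠ (1,1) also satisfies the corresponding inequality. -/
open Finset

/-- The inequality of Proposition 3.1 for a partition `μ` of length `s`
(with `μ_{s+1} := 0`). -/
def glIneq (s : ℕ) (μ : ℕ → ℤ) : Prop :=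
  ∑ i ∈ Icc 1 s, (μ i) ^ 2 - ∑ i ∈ Icc 1 s, μ i >
    ∑ i ∈ Icc 1 s, (μ i - μ (i + 1)) ^ 2 + μ 1 - 2

/-! Appending a part `b` to `μ` changes the left side of the inequality by `b² - b` and the
right side by `(μ_s - b)² + b² - μ_s² = 2b² - 2bμ_s`, so the gap grows by
`b (2μ_s - b - 1) ≥ 0` as soon as `1 ≤ b ≤ μ_s`. -/

def glDefect (s : ℕ) (μ : ℕ → ℤ) : ℤ :=
  (∑ i ∈ Icc 1 s, (μ i) ^ 2 - ∑ i ∈ Icc 1 s, μ i) -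
    (∑ i ∈ Icc 1 s, (μ i - μ (i + 1)) ^ 2 + μ 1 - 2)

theorem glIneq_iff_glDefect_pos {s : ℕ} {μ : ℕ → ℤ} : glIneq s μ ↔ 0 < glDefect s μ :=
  sub_pos.symm

theorem glDefect_update_succ {s : ℕ} {μ : ℕ → ℤ} (b : ℤ) (hs : 1 ≤ s)
    (hμ₁ : μ (s + 1) = 0) (hμ₂ : μ (s + 2) = 0) :
    glDefect (s + 1) (Function.update μ (s + 1) b) =
      glDefect s μ + b * (2 * μ s - b - 1) := by
  obtain ⟨t, rfl⟩ : ∃ t, s = t + 1 := ⟨s - 1, by omega⟩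
  set ν := Function.update μ (t + 2) b
  have hν : ∀ i, i ≠ t + 2 → ν i = μ i := fun i hi => Function.update_of_ne hi _ _
  have hν_top : ν (t + 2) = b := Function.update_self _ _ _
  have hν_low : ∀ i ∈ Icc 1 (t + 1), ν i = μ i := fun i hi => hν i (by grind)
  have hsq : ∑ i ∈ Icc 1 (t + 2), ν i ^ 2 = ∑ i ∈ Icc 1 (t + 1), μ i ^ 2 + b ^ 2 := by
    rw [sum_Icc_succ_top (by omega), hν_top, sum_congr rfl fun i hi => by rw [hν_low i hi]]
  have hlin : ∑ i ∈ Icc 1 (t + 2), ν i = ∑ i ∈ Icc 1 (t + 1), μ i + b := by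
    rw [sum_Icc_succ_top (by omega), hν_top, sum_congr rfl hν_low]
  have hdiff_low : ∑ i ∈ Icc 1 t, (ν i - ν (i + 1)) ^ 2 = ∑ i ∈ Icc 1 t, (μ i - μ (i + 1)) ^ 2 :=
    sum_congr rfl fun i hi => by rw [hν i (by grind), hν (i + 1) (by grind)]
  have hdiff : ∑ i ∈ Icc 1 (t + 2), (ν i - ν (i + 1)) ^ 2 =
      ∑ i ∈ Icc 1 t, (μ i - μ (i + 1)) ^ 2 + (μ (t + 1) - b) ^ 2 + b ^ 2 := by
    rw [sum_Icc_succ_top (by omega), sum_Icc_succ_top (by omega), hdiff_low, hν_top,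
      hν (t + 1) (by omega), hν (t + 3) (by omega), hμ₂, sub_zero]
  have hdiff_old : ∑ i ∈ Icc 1 (t + 1), (μ i - μ (i + 1)) ^ 2 =
      ∑ i ∈ Icc 1 t, (μ i - μ (i + 1)) ^ 2 + μ (t + 1) ^ 2 := by
    rw [sum_Icc_succ_top (by omega), hμ₁, sub_zero]
  unfold glDefect
  rw [hsq, hlin, hdiff, hdiff_old, hν 1 (by omega)]
  ring

theorem stmt_16_general (s : ℕ) (μ : ℕ → ℤ) (b : ℤ) (hs : 1 ≤ s)
    (hzero : ∀ i, s < i → μ i = 0)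
    (hb1 : 1 ≤ b) (hbs : b ≤ μ s)
    (hineq : glIneq s μ) :
    glIneq (s + 1) (Function.update μ (s + 1) b) := by
  rw [glIneq_iff_glDefect_pos] at hineq ⊢
  rw [glDefect_update_succ b hs (hzero _ (by omega)) (hzero _ (by omega))]
  have : 0 ≤ b * (2 * μ s - b - 1) := mul_nonneg (by omega) (by omega)
  omega

/-- Inductive step of Proposition 3.1: if `μ = (μ₁ ≥ … ≥ μ_s ≥ 1)` satisfies the
inequality, then appending a part `b` with `1 ≤ b ≤ μ_s` and `(μ_s, b) ≠ (1,1)`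
yields a partition again satisfying the inequality. -/
theorem stmt_16 (s : ℕ) (μ : ℕ → ℤ) (b : ℤ) (hs : 1 ≤ s)
    (hanti : ∀ i, 1 ≤ i → i < s → μ (i + 1) ≤ μ i)
    (hpos : ∀ i, 1 ≤ i → i ≤ s → 1 ≤ μ i)
    (hzero : ∀ i, s < i → μ i = 0)
    (hb1 : 1 ≤ b) (hbs : b ≤ μ s) (hne : ¬ (μ s = 1 ∧ b = 1))
    (hineq : glIneq s μ) :
    glIneq (s + 1) (Function.update μ (s + 1) b) :=
  stmt_16_general s μ b hs hzero hb1 hbs hineq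
end
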